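/- arXiv:2512.23970 — 2 statements merged into one kernel-verified Lean document; each statement's English description precedes it below -/
import Mathlib

section
/- Let $L$ be a $\mathbb{Z}$-graded vector space equipped, for each $k\ge1$, with a graded antisymmetric $k$-linear map $\ell_k\colon L^{\times k}\to L$ homogeneous of degree $k-2$ (no Jacobi identity assumed). Then for every $n\ge1$ and all homogeneous $p_i=(X_i,u_i)\in L\oplus L$ ($1\le i\le n$), the Jacobiator of the infinity adjoint brackets decomposes as $J_n^\ltimes(p_1,\dots,p_n)=\big(J_n(X_1,\dots,X_n),\ \sum_{D\subsetneq\{1,\dots,n\}}J_n(p_1^D,\dots,p_n^D)\big)$, where the sum runs over all proper subsets $D$ of $\{1,\dots,n\}$, including the empty set. In particular, if the $\ell_k$ satisfy the generalized Jacobi identities (i.e. all $J_n$ vanish), then so do the $\ell_k^\ltimes$. -/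
open scoped BigOperators

noncomputable section

/-- The Koszul sign of a permutation `σ` acting on homogeneous arguments of degrees `d`,
in the graded antisymmetric convention: transposing two adjacent arguments of degrees
`a, b` contributes the factor `-(-1)^(a*b)`. -/
def koszulSign {n : ℕ} (d : Fin n → ℤ) (σ : Equiv.Perm (Fin n)) : ℝ :=
  ((Equiv.Perm.sign σ : ℤ) : ℝ) *
    (-1 : ℝ) ^ (∑ p ∈ Finset.univ.filter
      (fun p : Fin n × Fin n => p.1 < p.2 ∧ σ p.2 < σ p.1), d (σ p.1) * d (σ p.2))

/-- The infinity adjoint brackets on `L ⊕ L`: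
`ℓ_k^⋉(p₁,…,p_k) = (ℓ_k(X₁,…,X_k), ∑_{A ⊊ {1,…,k}} ℓ_k(p₁^A,…,p_k^A))`. -/
def ellAdj {V : Type*} [AddCommGroup V] [Module ℝ V]
    (ℓ : ∀ k : ℕ, (Fin k → V) → V) (k : ℕ) (p : Fin k → V × V) : V × V :=
  (ℓ k (fun i => (p i).1),
    ∑ A ∈ (Finset.univ : Finset (Fin k)).ssubsets,
      ℓ k (fun i => if i ∈ A then (p i).1 else (p i).2))

/-- The set of `(k, n-k)`-shuffles: permutations `σ` of `{1,…,n}` with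
`σ(1) < … < σ(k)` and `σ(k+1) < … < σ(n)`. -/
def shuffles (n k : ℕ) : Finset (Equiv.Perm (Fin n)) :=
  Finset.univ.filter (fun σ =>
    ∀ i j : Fin n, i < j → ((j : ℕ) < k ∨ k ≤ (i : ℕ)) → σ i < σ j)

/-- The `n`-th Jacobiator of a family of brackets `ℓ`, evaluated on arguments `v`
homogeneous of degrees `d`:
`J_n(v₁,…,v_n) = ∑_{k=1}^{n} ∑_{σ ∈ Sh(k,n-k)} ε(σ) ℓ_{n-k+1}(ℓ_k(v_{σ(1)},…,v_{σ(k)}), v_{σ(k+1)},…,v_{σ(n)})`. -/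
def jac {W : Type*} [AddCommGroup W] [Module ℝ W]
    (ℓ : ∀ k : ℕ, (Fin k → W) → W) (n : ℕ) (d : Fin n → ℤ) (v : Fin n → W) : W :=
  ∑ k : Fin n, ∑ σ ∈ shuffles n (k.1 + 1),
    koszulSign d σ •
      ℓ (n - (k.1 + 1) + 1)
        (Fin.cons
          (ℓ (k.1 + 1) (fun i : Fin (k.1 + 1) => v (σ (Fin.castLE k.isLt i))))
          (fun j : Fin (n - (k.1 + 1)) =>
            v (σ ⟨k.1 + 1 + j.1, by have hj := j.2; have hk := k.2; omega⟩)))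

section AuxLemmas
open Finset
variable {α β γ : Type*}

def sjoin [DecidableEq γ] (e : α ⊕ β ≃ γ) (B : Finset α) (A : Finset β) : Finset γ :=
  B.image (fun a => e (Sum.inl a)) ∪ A.image (fun b => e (Sum.inr b))

lemma mem_sjoin_inl [DecidableEq γ] (e : α ⊕ β ≃ γ) (B : Finset α) (A : Finset β) (a : α) :
    e (Sum.inl a) ∈ sjoin e B A ↔ a ∈ B := by
  simp only [sjoin, mem_union, mem_image]
  constructor
  · rintro (⟨a', ha', h⟩ | ⟨b, hb, h⟩)
    · rwa [← Sum.inl.inj (e.injective h)]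
    · exact absurd (e.injective h) (by simp)
  · exact fun h => Or.inl ⟨a, h, rfl⟩

lemma mem_sjoin_inr [DecidableEq γ] (e : α ⊕ β ≃ γ) (B : Finset α) (A : Finset β) (b : β) :
    e (Sum.inr b) ∈ sjoin e B A ↔ b ∈ A := by
  simp only [sjoin, mem_union, mem_image]
  constructor
  · rintro (⟨a', ha', h⟩ | ⟨b', hb', h⟩)
    · exact absurd (e.injective h) (by simp)
    · rwa [← Sum.inr.inj (e.injective h)]
  · exact fun h => Or.inr ⟨b, h, rfl⟩

lemma sum_split [Fintype α] [Fintype β] [Fintype γ] [DecidableEq α] [DecidableEq β] [DecidableEq γ]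
    {W : Type*} [AddCommMonoid W] (e : α ⊕ β ≃ γ) (F : Finset γ → W) :
    ∑ C : Finset γ, F C = ∑ B : Finset α, ∑ A : Finset β, F (sjoin e B A) := by
  have hbij : Function.Bijective (fun BA : Finset α × Finset β => sjoin e BA.1 BA.2) := by
    refine Function.bijective_iff_has_inverse.2
      ⟨fun C => (univ.filter fun a => e (Sum.inl a) ∈ C, univ.filter fun b => e (Sum.inr b) ∈ C),
        ?_, ?_⟩
    · rintro ⟨B, A⟩
      refine Prod.ext ?_ ?_
      · ext a; simp [mem_sjoin_inl]
      · ext b; simp [mem_sjoin_inr]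
    · intro C
      ext x
      obtain ⟨y, rfl⟩ := e.surjective x
      cases y with
      | inl a => simp [mem_sjoin_inl]
      | inr b => simp [mem_sjoin_inr]
  have h1 : ∑ C : Finset γ, F C = ∑ BA : Finset α × Finset β, F (sjoin e BA.1 BA.2) :=
    (Fintype.sum_bijective _ hbij (fun BA => F (sjoin e BA.1 BA.2)) F (fun BA => rfl)).symm
  rw [h1, Fintype.sum_prod_type]

lemma sum_ssubsets [Fintype γ] [DecidableEq γ] {W : Type*} [AddCommGroup W] (F : Finset γ → W) :
    ∑ C ∈ (univ : Finset γ).ssubsets, F C = (∑ C : Finset γ, F C) - F univ := by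
  rw [Finset.ssubsets, Finset.sum_erase_eq_sub (by simp), Finset.powerset_univ]

lemma sum_fin_one {W : Type*} [AddCommMonoid W] (h : Finset (Fin 1) → W) :
    ∑ B : Finset (Fin 1), h B = h ∅ + h {0} := by
  have huniv : (univ : Finset (Finset (Fin 1))) = {∅, {0}} := by decide
  rw [huniv, Finset.sum_insert (by decide), Finset.sum_singleton]

lemma fst_cons {M : ℕ} {A B : Type*} (c : A × B) (f : Fin M → A × B) :
    (fun i => ((Fin.cons c f : Fin (M+1) → A × B) i).1) = Fin.cons c.1 (fun j => (f j).1) := by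
  funext i
  refine Fin.cases ?_ ?_ i <;> simp

lemma ite_cons_split {α : Type*} {M : ℕ} (e₂ : Fin 1 ⊕ Fin M ≃ Fin (M+1))
    (he0 : e₂ (Sum.inl 0) = 0) (hes : ∀ j : Fin M, e₂ (Sum.inr j) = j.succ)
    (c : α × α) (f : Fin M → α × α) (B₀ : Finset (Fin 1)) (A : Finset (Fin M)) :
    (fun i => if i ∈ sjoin e₂ B₀ A then ((Fin.cons c f : Fin (M+1) → α × α) i).1
               else ((Fin.cons c f : Fin (M+1) → α × α) i).2)
      = Fin.cons (if (0 : Fin 1) ∈ B₀ then c.1 else c.2)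
          (fun j => if j ∈ A then (f j).1 else (f j).2) := by
  funext i
  refine Fin.cases ?_ ?_ i
  · have h : ((0 : Fin (M+1)) ∈ sjoin e₂ B₀ A) = ((0 : Fin 1) ∈ B₀) := by
      rw [← he0]; exact propext (mem_sjoin_inl e₂ B₀ A 0)
    simp [h]
  · intro j
    have h : ((j.succ : Fin (M+1)) ∈ sjoin e₂ B₀ A) = (j ∈ A) := by
      rw [← hes j]; exact propext (mem_sjoin_inr e₂ B₀ A j)
    simp [h]

lemma cons_sum {V : Type*} [AddCommGroup V] [Module ℝ V] {M : ℕ}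
    (m : MultilinearMap ℝ (fun _ : Fin (M+1) => V) V) {ι : Type*} [DecidableEq ι] (s : Finset ι)
    (w : ι → V) (t : Fin M → V) :
    m (Fin.cons (∑ b ∈ s, w b) t) = ∑ b ∈ s, m (Fin.cons (w b) t) := by
  classical
  induction s using Finset.induction_on with
  | empty => simp only [Finset.sum_empty]; exact m.map_coord_zero 0 (by simp)
  | insert _ _ hx ih =>
      rw [Finset.sum_insert hx, MultilinearMap.cons_add, ih, Finset.sum_insert hx]

lemma key {V : Type*} [AddCommGroup V] [Module ℝ V]
    (ℓ : ∀ k : ℕ, MultilinearMap ℝ (fun _ : Fin k => V) V)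
    {n K M : ℕ} (inIdx : Fin K → Fin n) (outIdx : Fin M → Fin n)
    (e : Fin K ⊕ Fin M ≃ Fin n)
    (hin : ∀ i, e (Sum.inl i) = inIdx i) (hout : ∀ j, e (Sum.inr j) = outIdx j)
    (p : Fin n → V × V) :
    (ellAdj (fun m v => ℓ m v) (M+1)
        (Fin.cons (ellAdj (fun m v => ℓ m v) K (fun i => p (inIdx i))) (fun j => p (outIdx j)))).2
      = ∑ D ∈ (Finset.univ : Finset (Fin n)).ssubsets,
          ℓ (M+1) (Fin.cons
            (ℓ K (fun i => if inIdx i ∈ D then (p (inIdx i)).1 else (p (inIdx i)).2))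
            (fun j => if outIdx j ∈ D then (p (outIdx j)).1 else (p (outIdx j)).2)) := by
  classical
  set c : V × V := ellAdj (fun m v => ℓ m v) K (fun i => p (inIdx i)) with hc
  set f : Fin M → V × V := fun j => p (outIdx j) with hf
  set T : Finset (Fin K) → Finset (Fin M) → V := fun B A =>
    ℓ (M+1) (Fin.cons (ℓ K (fun i => if i ∈ B then (p (inIdx i)).1 else (p (inIdx i)).2))
      (fun j => if j ∈ A then (p (outIdx j)).1 else (p (outIdx j)).2)) with hT
  have hR : (∑ D ∈ (Finset.univ : Finset (Fin n)).ssubsets, ℓ (M+1) (Fin.cons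
            (ℓ K (fun i => if inIdx i ∈ D then (p (inIdx i)).1 else (p (inIdx i)).2))
            (fun j => if outIdx j ∈ D then (p (outIdx j)).1 else (p (outIdx j)).2)))
      = (∑ B : Finset (Fin K), ∑ A : Finset (Fin M), T B A) - T Finset.univ Finset.univ := by
    rw [sum_ssubsets, sum_split e]
    congr 1
    · refine Finset.sum_congr rfl fun B _ => Finset.sum_congr rfl fun A _ => ?_
      have h1 : ∀ i, (inIdx i ∈ sjoin e B A) = (i ∈ B) := fun i => by
        rw [← hin i]; exact propext (mem_sjoin_inl e B A i)
      have h2 : ∀ j, (outIdx j ∈ sjoin e B A) = (j ∈ A) := fun j => by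
        rw [← hout j]; exact propext (mem_sjoin_inr e B A j)
      simp only [hT, h1, h2]
    · simp only [hT, Finset.mem_univ, if_true]
  have hL : (ellAdj (fun m v => ℓ m v) (M+1) (Fin.cons c f)).2
      = (∑ B : Finset (Fin K), ∑ A : Finset (Fin M), T B A) - T Finset.univ Finset.univ := by
    set e₂ : Fin 1 ⊕ Fin M ≃ Fin (M+1) := finSumFinEquiv.trans (finCongr (Nat.add_comm 1 M))
      with he₂
    have he0 : e₂ (Sum.inl 0) = 0 := by
      rw [he₂]; apply Fin.ext; simp
    have hes : ∀ j : Fin M, e₂ (Sum.inr j) = j.succ := fun j => by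
      rw [he₂]; apply Fin.ext; simp [Nat.add_comm]
    show (∑ A ∈ (Finset.univ : Finset (Fin (M+1))).ssubsets,
        ℓ (M+1) (fun i => if i ∈ A then ((Fin.cons c f : Fin (M+1) → V × V) i).1
          else ((Fin.cons c f : Fin (M+1) → V × V) i).2)) = _
    rw [sum_ssubsets, sum_split e₂]
    have hsummand : ∀ (B₀ : Finset (Fin 1)) (A : Finset (Fin M)),
        ℓ (M+1) (fun i => if i ∈ sjoin e₂ B₀ A then ((Fin.cons c f : Fin (M+1) → V × V) i).1
          else ((Fin.cons c f : Fin (M+1) → V × V) i).2)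
          = ℓ (M+1) (Fin.cons (if (0 : Fin 1) ∈ B₀ then c.1 else c.2)
              (fun j => if j ∈ A then (f j).1 else (f j).2)) := fun B₀ A => by
      rw [ite_cons_split e₂ he0 hes]
    simp only [hsummand]
    rw [sum_fin_one (fun B₀ => ∑ A : Finset (Fin M),
      ℓ (M+1) (Fin.cons (if (0 : Fin 1) ∈ B₀ then c.1 else c.2)
        (fun j => if j ∈ A then (f j).1 else (f j).2)))]
    have hempty : ∀ A : Finset (Fin M),
        ℓ (M+1) (Fin.cons (if (0 : Fin 1) ∈ (∅ : Finset (Fin 1)) then c.1 else c.2)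
          (fun j => if j ∈ A then (f j).1 else (f j).2))
        = (∑ B : Finset (Fin K), T B A) - T Finset.univ A := by
      intro A
      rw [if_neg (Finset.notMem_empty _)]
      have hc2 : c.2 = ∑ B ∈ (Finset.univ : Finset (Fin K)).ssubsets,
          ℓ K (fun i => if i ∈ B then (p (inIdx i)).1 else (p (inIdx i)).2) := by
        rw [hc]; rfl
      rw [hc2, cons_sum, sum_ssubsets (fun B =>
        ℓ (M+1) (Fin.cons (ℓ K (fun i => if i ∈ B then (p (inIdx i)).1 else (p (inIdx i)).2))
          (fun j => if j ∈ A then (f j).1 else (f j).2)))]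
    have hfull : ∀ A : Finset (Fin M),
        ℓ (M+1) (Fin.cons (if (0 : Fin 1) ∈ ({0} : Finset (Fin 1)) then c.1 else c.2)
          (fun j => if j ∈ A then (f j).1 else (f j).2))
        = T Finset.univ A := by
      intro A
      rw [if_pos (Finset.mem_singleton_self 0)]
      simp only [hT, hf, hc, Finset.mem_univ, if_true]
      rfl
    have htop : ℓ (M+1) (fun i => if i ∈ (Finset.univ : Finset (Fin (M+1)))
        then ((Fin.cons c f : Fin (M+1) → V × V) i).1
        else ((Fin.cons c f : Fin (M+1) → V × V) i).2) = T Finset.univ Finset.univ := by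
      simp only [Finset.mem_univ, if_true]
      rw [fst_cons]
      simp only [hT, hf, hc, Finset.mem_univ, if_true]
      rfl
    simp only [hempty, hfull, htop]
    congr 1
    rw [Finset.sum_sub_distrib, sub_add_cancel]
    exact Finset.sum_comm
  rw [hL, hR]

lemma ellAdj_fst {V : Type*} [AddCommGroup V] [Module ℝ V]
    (ℓ : ∀ k : ℕ, (Fin k → V) → V) (m : ℕ) (q : Fin m → V × V) :
    (ellAdj ℓ m q).1 = ℓ m (fun i => (q i).1) := rfl

end AuxLemmas

/-- Let `L` be a `ℤ`-graded vector space with, for each `k ≥ 1`, a graded antisymmetric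
`k`-linear map `ℓ_k` homogeneous of degree `k - 2` (no Jacobi identity assumed).  Then
for every `n ≥ 1` and homogeneous `pᵢ = (Xᵢ, uᵢ) ∈ L ⊕ L`, the Jacobiator of the
infinity adjoint brackets decomposes as
`J_n^⋉(p₁,…,p_n) = (J_n(X₁,…,X_n), ∑_{D ⊊ {1,…,n}} J_n(p₁^D,…,p_n^D))`.
In particular, if all `J_n` vanish (the generalized Jacobi identities), so do the
Jacobiators of the `ℓ_k^⋉`. -/
theorem infinity_adjoint_jacobiator
    {V : Type*} [AddCommGroup V] [Module ℝ V] (G : ℤ → Submodule ℝ V)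
    (ℓ : ∀ k : ℕ, MultilinearMap ℝ (fun _ : Fin k => V) V)
    (hanti : ∀ k, 1 ≤ k → ∀ (d : Fin k → ℤ) (v : Fin k → V),
      (∀ i, v i ∈ G (d i)) → ∀ σ : Equiv.Perm (Fin k),
        ℓ k (v ∘ σ) = koszulSign d σ • ℓ k v)
    (hdeg : ∀ k, 1 ≤ k → ∀ (d : Fin k → ℤ) (v : Fin k → V),
      (∀ i, v i ∈ G (d i)) → ℓ k v ∈ G ((∑ i, d i) + ((k : ℤ) - 2))) :
    -- the Jacobiator of the infinity adjoint brackets decomposes: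
    (∀ n, 1 ≤ n → ∀ (d : Fin n → ℤ) (p : Fin n → V × V),
      (∀ i, p i ∈ (G (d i)).prod (G (d i))) →
      jac (ellAdj (fun m v => ℓ m v)) n d p =
        (jac (fun m v => ℓ m v) n d (fun i => (p i).1),
          ∑ D ∈ (Finset.univ : Finset (Fin n)).ssubsets,
            jac (fun m v => ℓ m v) n d (fun i => if i ∈ D then (p i).1 else (p i).2))) ∧
    -- in particular, the generalized Jacobi identities are inherited:
    ((∀ n, 1 ≤ n → ∀ (d : Fin n → ℤ) (v : Fin n → V),
        (∀ i, v i ∈ G (d i)) → jac (fun m v => ℓ m v) n d v = 0) →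
      ∀ n, 1 ≤ n → ∀ (d : Fin n → ℤ) (p : Fin n → V × V),
        (∀ i, p i ∈ (G (d i)).prod (G (d i))) →
        jac (ellAdj (fun m v => ℓ m v)) n d p = 0) := by
  classical
  have main : ∀ n, 1 ≤ n → ∀ (d : Fin n → ℤ) (p : Fin n → V × V),
      (∀ i, p i ∈ (G (d i)).prod (G (d i))) →
      jac (ellAdj (fun m v => ℓ m v)) n d p =
        (jac (fun m v => ℓ m v) n d (fun i => (p i).1),
          ∑ D ∈ (Finset.univ : Finset (Fin n)).ssubsets,
            jac (fun m v => ℓ m v) n d (fun i => if i ∈ D then (p i).1 else (p i).2)) := by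
    intro n hn d p hp
    refine Prod.ext ?_ ?_
    · simp only [jac, Prod.fst_sum, Prod.smul_fst]
      refine Finset.sum_congr rfl fun k _ => Finset.sum_congr rfl fun σ _ => ?_
      congr 1
      rw [ellAdj_fst, fst_cons, ellAdj_fst]
    · simp only [jac, Prod.snd_sum, Prod.smul_snd]
      refine Eq.trans (Finset.sum_congr rfl fun k _ => Finset.sum_congr rfl fun σ _ =>
        congrArg (fun z => koszulSign d σ • z)
          (key ℓ (fun i => σ (Fin.castLE k.isLt i))
            (fun j : Fin (n - (k.1+1)) => σ ⟨k.1+1+j.1, by have hj := j.2; have hk := k.2; omega⟩)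
            ((finSumFinEquiv.trans
              (finCongr (by have := k.2; omega : (k.1+1) + (n - (k.1+1)) = n))).trans σ)
            (fun i => congrArg σ (Fin.ext (by simp)))
            (fun j => congrArg σ (Fin.ext (by simp))) p)) ?_
      simp only [Finset.smul_sum]
      refine Eq.trans (Finset.sum_congr rfl fun k _ => Finset.sum_comm) ?_
      rw [Finset.sum_comm]
  refine ⟨main, fun hJ n hn d p hp => ?_⟩
  rw [main n hn d p hp, hJ n hn d _ (fun i => (Submodule.mem_prod.1 (hp i)).1),
    Finset.sum_eq_zero (fun D _ => hJ n hn d _ (fun i => by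
      by_cases h : i ∈ D
      · simpa [h] using (Submodule.mem_prod.1 (hp i)).1
      · simpa [h] using (Submodule.mem_prod.1 (hp i)).2))]
  rfl

end
end

section
/- Let $M$ be a module over a commutative ring $R$ and let $b\colon M\times M\to M$ be an alternating $R$-bilinear map (no Jacobi identity assumed). Define $b^\ltimes$ on $M\times M$ by $b^\ltimes((X_1,u_1),(X_2,u_2)):=\big(b(X_1,X_2),\,b(X_1,u_2)+b(u_1,X_2)+b(u_1,u_2)\big)$, and for any alternating bilinear map $c$ define its Jacobiator $J_c(x,y,z):=c(c(x,y),z)+c(c(y,z),x)+c(c(z,x),y)$. Then for all $p_i=(X_i,u_i)\in M\times M$ ($i=1,2,3$), $J_{b^\ltimes}(p_1,p_2,p_3)=\big(J_b(X_1,X_2,X_3),\ \sum_{D\subsetneq\{1,2,3\}}J_b(p_1^D,p_2^D,p_3^D)\big)$, where $p_i^D=X_i$ if $i\in D$ and $p_i^D=u_i$ if $i\notin D$, and $D$ runs over all seven proper subsets of $\{1,2,3\}$ (including the empty set). In particular, if $b$ satisfies the Jacobi identity then so does $b^\ltimes$. -/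
/-- The binary infinity adjoint bracket associated to a binary operation `b` on `M`:
`b⋉((X₁,u₁),(X₂,u₂)) = (b(X₁,X₂), b(X₁,u₂) + b(u₁,X₂) + b(u₁,u₂))`. -/
def badj {M : Type*} [AddCommGroup M] (b : M → M → M) (p q : M × M) : M × M :=
  (b p.1 q.1, b p.1 q.2 + b p.2 q.1 + b p.2 q.2)

/-- The Jacobiator of a binary operation:
`J_c(x,y,z) = c(c(x,y),z) + c(c(y,z),x) + c(c(z,x),y)`. -/
def jacobiator {α : Type*} [Add α] (c : α → α → α) (x y z : α) : α :=
  c (c x y) z + c (c y z) x + c (c z x) y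

/-- For an alternating `R`-bilinear map `b : M × M → M` (no Jacobi identity assumed),
the Jacobiator of `b⋉` decomposes as
`J_{b⋉}(p₁,p₂,p₃) = (J_b(X₁,X₂,X₃), ∑_{D ⊊ {1,2,3}} J_b(p₁^D,p₂^D,p₃^D))`,
the sum running over all seven proper subsets of `{1,2,3}` (including `∅`),
where `pᵢ^D = Xᵢ` if `i ∈ D` and `pᵢ^D = uᵢ` otherwise.  In particular, if `b`
satisfies the Jacobi identity then so does `b⋉`. -/
theorem badj_jacobiator {R M : Type*} [CommRing R] [AddCommGroup M] [Module R M]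
    (b : M → M → M)
    (hadd_left : ∀ x y z : M, b (x + y) z = b x z + b y z)
    (hsmul_left : ∀ (c : R) (x z : M), b (c • x) z = c • b x z)
    (hadd_right : ∀ x y z : M, b x (y + z) = b x y + b x z)
    (hsmul_right : ∀ (c : R) (x y : M), b x (c • y) = c • b x y)
    (halt : ∀ x : M, b x x = 0) :
    (∀ p₁ p₂ p₃ : M × M,
      jacobiator (badj b) p₁ p₂ p₃ =
        (jacobiator b p₁.1 p₂.1 p₃.1,
          -- D = ∅, {1}, {2}, {3}, {1,2}, {1,3}, {2,3}
          jacobiator b p₁.2 p₂.2 p₃.2 +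
          jacobiator b p₁.1 p₂.2 p₃.2 +
          jacobiator b p₁.2 p₂.1 p₃.2 +
          jacobiator b p₁.2 p₂.2 p₃.1 +
          jacobiator b p₁.1 p₂.1 p₃.2 +
          jacobiator b p₁.1 p₂.2 p₃.1 +
          jacobiator b p₁.2 p₂.1 p₃.1)) ∧
    ((∀ x y z : M, jacobiator b x y z = 0) →
      ∀ p q r : M × M, jacobiator (badj b) p q r = 0) := by
  have main : ∀ p₁ p₂ p₃ : M × M,
      jacobiator (badj b) p₁ p₂ p₃ =
        (jacobiator b p₁.1 p₂.1 p₃.1,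
          jacobiator b p₁.2 p₂.2 p₃.2 +
          jacobiator b p₁.1 p₂.2 p₃.2 +
          jacobiator b p₁.2 p₂.1 p₃.2 +
          jacobiator b p₁.2 p₂.2 p₃.1 +
          jacobiator b p₁.1 p₂.1 p₃.2 +
          jacobiator b p₁.1 p₂.2 p₃.1 +
          jacobiator b p₁.2 p₂.1 p₃.1) := by
    intro p₁ p₂ p₃
    simp only [jacobiator, badj, hadd_left, hadd_right, Prod.mk_add_mk, Prod.ext_iff]
    constructor
    · trivial
    · abel
  refine ⟨main, fun hJ p q r => ?_⟩
  rw [main p q r]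
  simp [hJ]
end
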